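/- arXiv:1611.06872 — 2 statements merged into one kernel-verified Lean document; each statement's English description precedes it below -/
import Mathlib

section
/- Let k₁ > 0 and k₂ > 0 be real parameters and let y be a real number. If g : ℝ → ℝ is a measurable function with g(x) ≥ 0 for all x, then the dual intertwining operator satisfies ᵗV g(y) := ∫_{|x|>|y|} K(x,y) g(x) A(x) dx ≥ 0. -/
open Real MeasureTheory intervalIntegral

noncomputable section

/-- `A(x) = |2 sinh(x/2)|^{2k₁} · |2 sinh x|^{2k₂}` -/
def A (k₁ k₂ x : ℝ) : ℝ :=
  |2 * Real.sinh (x / 2)| ^ (2 * k₁) * |2 * Real.sinh x| ^ (2 * k₂)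

/-- `c = 2^{3k₁+3k₂} · Γ(k₁+k₂+1/2) / (√π · Γ(k₁) · Γ(k₂))` -/
def c (k₁ k₂ : ℝ) : ℝ :=
  2 ^ (3 * k₁ + 3 * k₂) * Real.Gamma (k₁ + k₂ + 1 / 2) /
    (Real.sqrt Real.pi * Real.Gamma k₁ * Real.Gamma k₂)

/-- `σ(x,y,z) = sign(x)·( e^{x/2}·(2 cosh(x/2)) − e^{−y/2}·(2 cosh(z/2)) )` -/
def sigmaK (x y z : ℝ) : ℝ :=
  Real.sign x *
    (Real.exp (x / 2) * (2 * Real.cosh (x / 2)) -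
      Real.exp (-y / 2) * (2 * Real.cosh (z / 2)))

/-- The kernel `K(x,y)` of the intertwining operator, for `|x| > |y|`. -/
def K (k₁ k₂ x y : ℝ) : ℝ :=
  c k₁ k₂ / 4 * (A k₁ k₂ x)⁻¹ *
    ∫ z in |y|..|x|,
      sigmaK x y z * (Real.cosh (z / 2) - Real.cosh (y / 2)) ^ (k₁ - 1) *
        (Real.cosh x - Real.cosh z) ^ (k₂ - 1) * Real.sinh (z / 2)

end

lemma A_nonneg (k₁ k₂ x : ℝ) : 0 ≤ A k₁ k₂ x :=
  mul_nonneg (rpow_nonneg (abs_nonneg _) _) (rpow_nonneg (abs_nonneg _) _)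

lemma c_pos {k₁ k₂ : ℝ} (hk₁ : 0 < k₁) (hk₂ : 0 < k₂) : 0 < c k₁ k₂ := by
  have := Gamma_pos_of_pos hk₁
  have := Gamma_pos_of_pos hk₂
  have := Gamma_pos_of_pos (by positivity : 0 < k₁ + k₂ + 1 / 2)
  have := sqrt_pos.mpr pi_pos
  unfold c
  positivity

lemma exp_mul_two_cosh (a b : ℝ) : exp a * (2 * cosh b) = exp (a + b) + exp (a - b) := by
  rw [cosh_eq, sub_eq_add_neg, exp_add, exp_add]
  ring

/- `σ(x,y,z) = sign x · ((eˣ + 1) − (e^{(z−y)/2} + e^{−(z+y)/2}))`, and for `|y| ≤ z ≤ |x|` the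
two exponentials compare termwise with `eˣ` and `1`, in the direction fixed by `sign x`. -/
lemma sigmaK_nonneg {x y z : ℝ} (hyz : |y| ≤ z) (hzx : z ≤ |x|) : 0 ≤ sigmaK x y z := by
  have hy := abs_le.mp hyz
  rw [sigmaK, exp_mul_two_cosh, exp_mul_two_cosh, add_halves, sub_self, exp_zero]
  rcases lt_trichotomy x 0 with hx | rfl | hx
  · rw [abs_of_neg hx] at hzx
    have h₁ : exp x ≤ exp (-y / 2 - z / 2) := exp_le_exp.mpr (by linarith)
    have h₂ : 1 ≤ exp (-y / 2 + z / 2) := one_le_exp (by linarith)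
    rw [sign_of_neg hx]
    linarith
  · simp
  · rw [abs_of_pos hx] at hzx
    have h₁ : exp (-y / 2 + z / 2) ≤ exp x := exp_le_exp.mpr (by linarith)
    have h₂ : exp (-y / 2 - z / 2) ≤ 1 := exp_le_one_iff.mpr (by linarith)
    rw [sign_of_pos hx]
    linarith

lemma K_integrand_nonneg {k₁ k₂ x y z : ℝ} (hyz : |y| ≤ z) (hzx : z ≤ |x|) :
    0 ≤ sigmaK x y z * (cosh (z / 2) - cosh (y / 2)) ^ (k₁ - 1) *
      (cosh x - cosh z) ^ (k₂ - 1) * sinh (z / 2) := by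
  have hz : 0 ≤ z := (abs_nonneg y).trans hyz
  have hcosh₁ : cosh (y / 2) ≤ cosh (z / 2) := by
    rw [cosh_le_cosh, abs_div, abs_two, abs_of_nonneg (by positivity : 0 ≤ z / 2)]
    linarith
  have hcosh₂ : cosh z ≤ cosh x := by rwa [cosh_le_cosh, abs_of_nonneg hz]
  have hsinh : 0 ≤ sinh (z / 2) := sinh_nonneg_iff.mpr (by positivity)
  exact mul_nonneg (mul_nonneg (mul_nonneg (sigmaK_nonneg hyz hzx)
    (rpow_nonneg (sub_nonneg.mpr hcosh₁) _)) (rpow_nonneg (sub_nonneg.mpr hcosh₂) _)) hsinh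

lemma K_nonneg {k₁ k₂ x y : ℝ} (hk₁ : 0 < k₁) (hk₂ : 0 < k₂) (hxy : |y| ≤ |x|) :
    0 ≤ K k₁ k₂ x y := by
  have := integral_nonneg (μ := volume) hxy fun z hz =>
    K_integrand_nonneg (k₁ := k₁) (k₂ := k₂) hz.1 hz.2
  have := c_pos hk₁ hk₂
  have := A_nonneg k₁ k₂ x
  unfold K
  positivity

theorem stmt4_general (k₁ k₂ : ℝ) (hk₁ : 0 < k₁) (hk₂ : 0 < k₂)
    (y : ℝ) (g : ℝ → ℝ) (hg0 : ∀ x, 0 ≤ g x) :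
    0 ≤ ∫ x in {x : ℝ | |y| < |x|}, K k₁ k₂ x y * g x * A k₁ k₂ x :=
  setIntegral_nonneg (measurableSet_lt measurable_const measurable_id.abs) fun x hx =>
    mul_nonneg (mul_nonneg (K_nonneg hk₁ hk₂ hx.le) (hg0 x)) (A_nonneg k₁ k₂ x)

theorem stmt4 (k₁ k₂ : ℝ) (hk₁ : 0 < k₁) (hk₂ : 0 < k₂)
    (y : ℝ) (g : ℝ → ℝ) (hg : Measurable g) (hg0 : ∀ x, 0 ≤ g x) :
    0 ≤ ∫ x in {x : ℝ | |y| < |x|}, K k₁ k₂ x y * g x * A k₁ k₂ x :=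
  stmt4_general k₁ k₂ hk₁ hk₂ y g hg0
end

section
/- Let k₁ > 0 and k₂ > 0 be real parameters and let x, y be real numbers with |x| > |y|. Then K̃(x/2, y/2) := ∫_{|y|/2}^{|x|/2} K_J(w, y/2) · A(2w) dw = (c/k₂) · ∫_{|y|/2}^{|x|/2} (cosh z − cosh(y/2))^{k₁−1} · (cosh x − cosh 2z)^{k₂} · sinh z dz, where K_J(w,v) = 2c·A(2w)^{−1}·|sinh 2w| · ∫_{|v|}^{w} (cosh z − cosh v)^{k₁−1}·(cosh 2w − cosh 2z)^{k₂−1}·sinh z dz. -/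
open Real MeasureTheory intervalIntegral

/-- The kernel `K_J` of the intertwining operator in the Jacobi setting,
for `0 ≤ |v| < w`. -/
noncomputable def KJ (k₁ k₂ w v : ℝ) : ℝ :=
  2 * c k₁ k₂ * (A k₁ k₂ (2 * w))⁻¹ * |Real.sinh (2 * w)| *
    ∫ z in |v|..w,
      (Real.cosh z - Real.cosh v) ^ (k₁ - 1) *
        (Real.cosh (2 * w) - Real.cosh (2 * z)) ^ (k₂ - 1) * Real.sinh z

/-!
Multiplying by `A(2w)` cancels the normalisation of `K_J`, so the left side is the integral of a
nonnegative function over the triangle `|y|/2 < z ≤ w ≤ |x|/2`. By Tonelli we may integrate in `w`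
first, and `2 sinh 2w · (cosh 2w - cosh 2z)^(k₂-1)` is the derivative of
`(cosh 2w - cosh 2z)^k₂ / k₂`. The integrands are singular when `k₁ < 1` or `k₂ < 1`, but each
is a nonnegative derivative `φ^(p-1) φ'` of a continuous function `φ^p / p`, hence integrable.
-/

open Set Function

section RpowDeriv

variable {φ φ' : ℝ → ℝ} {a b p : ℝ}

theorem hasDerivAt_rpow_div_self {x : ℝ} (hp : p ≠ 0) (hφ : HasDerivAt φ (φ' x) x)
    (hx : 0 < φ x) : HasDerivAt (fun x => φ x ^ p / p) (φ x ^ (p - 1) * φ' x) x :=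
  ((hφ.rpow_const (Or.inl hx.ne')).div_const p).congr_deriv (by field_simp)

theorem intervalIntegrable_rpow_sub_one_mul_deriv (hp : 0 < p) (hab : a ≤ b)
    (hcont : ContinuousOn φ (Icc a b)) (hderiv : ∀ x ∈ Ioo a b, HasDerivAt φ (φ' x) x)
    (hφ : ∀ x ∈ Ioo a b, 0 < φ x) (hφ' : ∀ x ∈ Ioo a b, 0 ≤ φ' x) :
    IntervalIntegrable (fun x => φ x ^ (p - 1) * φ' x) volume a b :=
  (intervalIntegrable_iff_integrableOn_Ioc_of_le hab).2 <|
    integrableOn_deriv_of_nonneg ((hcont.rpow_const fun _ _ => Or.inr hp.le).div_const p)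
      (fun x hx => hasDerivAt_rpow_div_self hp.ne' (hderiv x hx) (hφ x hx))
      fun x hx => mul_nonneg (rpow_nonneg (hφ x hx).le _) (hφ' x hx)

theorem integral_rpow_sub_one_mul_deriv (hp : 0 < p) (hab : a ≤ b)
    (hcont : ContinuousOn φ (Icc a b)) (hderiv : ∀ x ∈ Ioo a b, HasDerivAt φ (φ' x) x)
    (hφ : ∀ x ∈ Ioo a b, 0 < φ x) (hφ' : ∀ x ∈ Ioo a b, 0 ≤ φ' x) :
    ∫ x in a..b, φ x ^ (p - 1) * φ' x = (φ b ^ p - φ a ^ p) / p := by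
  rw [integral_eq_sub_of_hasDerivAt_of_le hab
    ((hcont.rpow_const fun _ _ => Or.inr hp.le).div_const p)
    (fun x hx => hasDerivAt_rpow_div_self hp.ne' (hderiv x hx) (hφ x hx))
    (intervalIntegrable_rpow_sub_one_mul_deriv hp hab hcont hderiv hφ hφ'), sub_div]

end RpowDeriv

theorem integral_integral_swap_triangle_of_nonneg {f : ℝ → ℝ → ℝ} {a b : ℝ} (hab : a ≤ b)
    (hf : Measurable (uncurry f)) (hf_nonneg : ∀ w z, a < z → z ≤ w → w ≤ b → 0 ≤ f w z)
    (hf_fiber : ∀ z ∈ Ioc a b, IntervalIntegrable (f · z) volume z b)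
    (hf_int : IntervalIntegrable (fun z => ∫ w in z..b, f w z) volume a b) :
    ∫ w in a..b, ∫ z in a..w, f w z = ∫ z in a..b, ∫ w in z..b, f w z := by
  set μ := volume.restrict (Ioc a b)
  set F : ℝ → ℝ → ℝ := fun w z => if z ≤ w then f w z else 0 with hF
  have hF_fst : ∀ w, F w = (Iic w).indicator (f w) := fun w => by
    ext z; simp [hF, indicator_apply]
  have hF_snd : ∀ z, (F · z) = (Ici z).indicator (f · z) := fun z => by
    ext w; simp [hF, indicator_apply]
  have hIcc : ∀ z ∈ Ioc a b, Ioc a b ∩ Ici z = Icc z b := fun z hz => by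
    ext w; simp only [mem_inter_iff, mem_Ioc, mem_Ici, mem_Icc]
    constructor
    · rintro ⟨⟨-, hwb⟩, hzw⟩; exact ⟨hzw, hwb⟩
    · rintro ⟨hzw, hwb⟩; exact ⟨⟨hz.1.trans_le hzw, hwb⟩, hzw⟩
  have h_fst : ∀ w ∈ Ioc a b, ∫ z in a..w, f w z = ∫ z, F w z ∂μ := fun w hw => by
    rw [hF_fst, setIntegral_indicator measurableSet_Iic, Ioc_inter_Iic, min_eq_right hw.2,
      integral_of_le hw.1.le]
  have h_snd : ∀ z ∈ Ioc a b, ∫ w in z..b, f w z = ∫ w, F w z ∂μ := fun z hz => by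
    rw [hF_snd, setIntegral_indicator measurableSet_Ici, hIcc z hz, integral_Icc_eq_integral_Ioc,
      integral_of_le hz.2]
  have hF_int : Integrable (uncurry F) (μ.prod μ) := by
    have hF_meas : Measurable (uncurry F) :=
      Measurable.ite (measurableSet_le measurable_snd measurable_fst) hf measurable_const
    refine (integrable_prod_iff' hF_meas.aestronglyMeasurable).2 ⟨?_, ?_⟩
    · filter_upwards [ae_restrict_mem measurableSet_Ioc] with z hz
      change Integrable (F · z) μ
      rw [hF_snd, integrable_indicator_iff measurableSet_Ici, IntegrableOn,
        Measure.restrict_restrict measurableSet_Ici, inter_comm, hIcc z hz]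
      exact (intervalIntegrable_iff_integrableOn_Icc_of_le hz.2).1 (hf_fiber z hz)
    · refine ((intervalIntegrable_iff_integrableOn_Ioc_of_le hab).1 hf_int).congr ?_
      filter_upwards [ae_restrict_mem measurableSet_Ioc] with z hz
      rw [h_snd z hz]
      refine integral_congr_ae ?_
      filter_upwards [ae_restrict_mem measurableSet_Ioc] with w hw
      refine (norm_of_nonneg ?_).symm
      simp only [hF]
      split_ifs with hzw
      exacts [hf_nonneg w z hz.1 hzw hw.2, le_rfl]
  rw [integral_of_le hab, integral_of_le hab, setIntegral_congr_fun measurableSet_Ioc h_fst,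
    setIntegral_congr_fun measurableSet_Ioc h_snd]
  exact integral_integral_swap hF_int

theorem cosh_sub_cosh_pos {s t : ℝ} (hs : 0 ≤ s) (hst : s < t) : 0 < cosh t - cosh s :=
  sub_pos.2 <| cosh_lt_cosh.2 <| by rwa [abs_of_nonneg hs, abs_of_nonneg (hs.trans hst.le)]

theorem cosh_sub_cosh_nonneg {s t : ℝ} (hs : 0 ≤ s) (hst : s ≤ t) : 0 ≤ cosh t - cosh s :=
  sub_nonneg.2 <| cosh_le_cosh.2 <| by rwa [abs_of_nonneg hs, abs_of_nonneg (hs.trans hst)]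

theorem intervalIntegrable_cosh_sub_rpow_mul_sinh {p a b : ℝ} (hp : 0 < p) (ha : 0 ≤ a)
    (hab : a ≤ b) :
    IntervalIntegrable (fun z => (cosh z - cosh a) ^ (p - 1) * sinh z) volume a b :=
  intervalIntegrable_rpow_sub_one_mul_deriv hp hab (by fun_prop)
    (fun z _ => (hasDerivAt_cosh z).sub_const _) (fun z hz => cosh_sub_cosh_pos ha hz.1)
    fun z hz => sinh_nonneg_iff.2 (ha.trans hz.1.le)

theorem hasDerivAt_cosh_two_mul_sub (z w : ℝ) :
    HasDerivAt (fun w => cosh (2 * w) - cosh (2 * z)) (sinh (2 * w) * 2) w :=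
  (((hasDerivAt_id w).const_mul 2).cosh.sub_const _).congr_deriv (by simp)

section CoshTwoMul

variable {p z b : ℝ}

theorem intervalIntegrable_cosh_two_mul_sub_rpow_mul_sinh (hp : 0 < p) (hz : 0 ≤ z)
    (hzb : z ≤ b) :
    IntervalIntegrable (fun w => (cosh (2 * w) - cosh (2 * z)) ^ (p - 1) * (sinh (2 * w) * 2))
      volume z b :=
  intervalIntegrable_rpow_sub_one_mul_deriv hp hzb (by fun_prop)
    (fun w _ => hasDerivAt_cosh_two_mul_sub z w)
    (fun w hw => cosh_sub_cosh_pos (by linarith) (by linarith [hw.1]))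
    fun w hw => mul_nonneg (sinh_nonneg_iff.2 (by linarith [hw.1])) zero_le_two

theorem integral_cosh_two_mul_sub_rpow_mul_sinh (hp : 0 < p) (hz : 0 ≤ z) (hzb : z ≤ b) :
    ∫ w in z..b, (cosh (2 * w) - cosh (2 * z)) ^ (p - 1) * (sinh (2 * w) * 2)
      = (cosh (2 * b) - cosh (2 * z)) ^ p / p := by
  rw [integral_rpow_sub_one_mul_deriv hp hzb (by fun_prop)
    (fun w _ => hasDerivAt_cosh_two_mul_sub z w)
    (fun w hw => cosh_sub_cosh_pos (by linarith) (by linarith [hw.1]))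
    fun w hw => mul_nonneg (sinh_nonneg_iff.2 (by linarith [hw.1])) zero_le_two]
  simp [zero_rpow hp.ne']

end CoshTwoMul

theorem integral_integral_cosh_rpow_triangle {k₁ k₂ a b : ℝ} (hk₁ : 0 < k₁) (hk₂ : 0 < k₂)
    (ha : 0 ≤ a) (hab : a ≤ b) :
    ∫ w in a..b, ∫ z in a..w, (cosh z - cosh a) ^ (k₁ - 1) * sinh z *
        ((cosh (2 * w) - cosh (2 * z)) ^ (k₂ - 1) * (sinh (2 * w) * 2))
      = ∫ z in a..b, (cosh z - cosh a) ^ (k₁ - 1) * sinh z *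
        ((cosh (2 * b) - cosh (2 * z)) ^ k₂ / k₂) := by
  have h_inner : ∀ z ∈ Ioc a b,
      ∫ w in z..b, (cosh z - cosh a) ^ (k₁ - 1) * sinh z *
        ((cosh (2 * w) - cosh (2 * z)) ^ (k₂ - 1) * (sinh (2 * w) * 2))
      = (cosh z - cosh a) ^ (k₁ - 1) * sinh z * ((cosh (2 * b) - cosh (2 * z)) ^ k₂ / k₂) :=
    fun z hz => by
      rw [intervalIntegral.integral_const_mul,
        integral_cosh_two_mul_sub_rpow_mul_sinh hk₂ (ha.trans hz.1.le) hz.2]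
  have h_outer : IntervalIntegrable (fun z => (cosh z - cosh a) ^ (k₁ - 1) * sinh z *
      ((cosh (2 * b) - cosh (2 * z)) ^ k₂ / k₂)) volume a b :=
    (intervalIntegrable_cosh_sub_rpow_mul_sinh hk₁ ha hab).mul_continuousOn
      ((Continuous.rpow_const (by fun_prop) fun _ => Or.inr hk₂.le).div_const _).continuousOn
  rw [integral_integral_swap_triangle_of_nonneg hab (by fun_prop) ?_ ?_ ?_]
  · exact integral_congr_ae (ae_of_all _ fun z hz => h_inner z (by rwa [uIoc_of_le hab] at hz))
  · intro w z haz hzw hwb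
    have hz : 0 ≤ z := ha.trans haz.le
    exact mul_nonneg (mul_nonneg (rpow_nonneg (cosh_sub_cosh_pos ha haz).le _)
        (sinh_nonneg_iff.2 hz))
      (mul_nonneg (rpow_nonneg (cosh_sub_cosh_nonneg (by positivity) (by linarith)) _)
        (mul_nonneg (sinh_nonneg_iff.2 (by linarith)) zero_le_two))
  · exact fun z hz => (intervalIntegrable_cosh_two_mul_sub_rpow_mul_sinh hk₂
      (ha.trans hz.1.le) hz.2).const_mul _
  · refine h_outer.congr_ae ?_
    rw [uIoc_of_le hab]
    filter_upwards [ae_restrict_mem measurableSet_Ioc] with z hz using (h_inner z hz).symm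

theorem A_pos (k₁ k₂ : ℝ) {x : ℝ} (hx : x ≠ 0) : 0 < A k₁ k₂ x := by
  unfold A
  have h₁ : 2 * sinh (x / 2) ≠ 0 := mul_ne_zero two_ne_zero (sinh_ne_zero.2 (by simpa))
  have h₂ : 2 * sinh x ≠ 0 := mul_ne_zero two_ne_zero (sinh_ne_zero.2 hx)
  exact mul_pos (rpow_pos_of_pos (abs_pos.2 h₁) _) (rpow_pos_of_pos (abs_pos.2 h₂) _)

theorem KJ_mul_A (k₁ k₂ v : ℝ) {w : ℝ} (hw : 0 < w) :
    KJ k₁ k₂ w v * A k₁ k₂ (2 * w) = c k₁ k₂ * ∫ z in |v|..w, (cosh z - cosh v) ^ (k₁ - 1) *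
      sinh z * ((cosh (2 * w) - cosh (2 * z)) ^ (k₂ - 1) * (sinh (2 * w) * 2)) := by
  have hA := (A_pos k₁ k₂ (by positivity : 2 * w ≠ 0)).ne'
  have h_factor : ∫ z in |v|..w, (cosh z - cosh v) ^ (k₁ - 1) * sinh z *
        ((cosh (2 * w) - cosh (2 * z)) ^ (k₂ - 1) * (sinh (2 * w) * 2))
      = (∫ z in |v|..w, (cosh z - cosh v) ^ (k₁ - 1) *
          (cosh (2 * w) - cosh (2 * z)) ^ (k₂ - 1) * sinh z) * (sinh (2 * w) * 2) := by
    rw [← intervalIntegral.integral_mul_const]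
    congr 1 with z
    ring
  rw [KJ, abs_of_pos (sinh_pos_iff.2 (by positivity)), h_factor]
  field_simp

theorem stmt15 (k₁ k₂ : ℝ) (hk₁ : 0 < k₁) (hk₂ : 0 < k₂)
    (x y : ℝ) (hxy : |y| < |x|) :
    ∫ w in (|y| / 2)..(|x| / 2), KJ k₁ k₂ w (y / 2) * A k₁ k₂ (2 * w)
      = c k₁ k₂ / k₂ *
        ∫ z in (|y| / 2)..(|x| / 2),
          (Real.cosh z - Real.cosh (y / 2)) ^ (k₁ - 1) *
            (Real.cosh x - Real.cosh (2 * z)) ^ k₂ * Real.sinh z := by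
  have ha : 0 ≤ |y| / 2 := by positivity
  have hab : |y| / 2 ≤ |x| / 2 := by linarith
  have hv : |y / 2| = |y| / 2 := by rw [abs_div, abs_two]
  have hcosh_y : cosh (y / 2) = cosh (|y| / 2) := by rw [← hv, cosh_abs]
  have hcosh_x : cosh (2 * (|x| / 2)) = cosh x := by rw [mul_div_cancel₀ _ two_ne_zero, cosh_abs]
  calc ∫ w in (|y| / 2)..(|x| / 2), KJ k₁ k₂ w (y / 2) * A k₁ k₂ (2 * w)
      = c k₁ k₂ * ∫ w in (|y| / 2)..(|x| / 2), ∫ z in (|y| / 2)..w,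
          (cosh z - cosh (|y| / 2)) ^ (k₁ - 1) * sinh z *
            ((cosh (2 * w) - cosh (2 * z)) ^ (k₂ - 1) * (sinh (2 * w) * 2)) := by
        rw [← intervalIntegral.integral_const_mul]
        refine integral_congr_ae (ae_of_all _ fun w hw => ?_)
        rw [uIoc_of_le hab] at hw
        rw [KJ_mul_A _ _ _ (ha.trans_lt hw.1), hv, hcosh_y]
    _ = c k₁ k₂ * ∫ z in (|y| / 2)..(|x| / 2), (cosh z - cosh (|y| / 2)) ^ (k₁ - 1) * sinh z *
          ((cosh (2 * (|x| / 2)) - cosh (2 * z)) ^ k₂ / k₂) := by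
        rw [integral_integral_cosh_rpow_triangle hk₁ hk₂ ha hab]
    _ = c k₁ k₂ / k₂ * ∫ z in (|y| / 2)..(|x| / 2), (cosh z - cosh (y / 2)) ^ (k₁ - 1) *
          (cosh x - cosh (2 * z)) ^ k₂ * sinh z := by
        rw [hcosh_x, hcosh_y, div_mul_eq_mul_div, mul_div_assoc, ← intervalIntegral.integral_div]
        exact congrArg _ (integral_congr fun z _ => by ring)
end
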